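/- arXiv:1204.1350 — 5 statements merged into one kernel-verified Lean document; each statement's English description precedes it below -/
import Mathlib

section
/- In any ordered field F and any c > 0, there is no non-degenerate triangle all of whose sides have squared slope c. Precisely: if x, y, z ∈ F^d satisfy c·(x₁-y₁)² = Σᵢ₌₂^d (xᵢ-yᵢ)², c·(y₁-z₁)² = Σᵢ₌₂^d (yᵢ-zᵢ)², and c·(z₁-x₁)² = Σᵢ₌₂^d (zᵢ-xᵢ)², then x, y, z are collinear. -/
/-!
Write `a = x - y` and `b = y - z`, and let `Q v = c v₀² - ∑_{i ≠ 0} vᵢ²`. The hypotheses say that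
`a`, `b` and `a + b` are isotropic for `Q`, so by polarization `∑_{i ≠ 0} aᵢ bᵢ = c a₀ b₀`.
Lagrange's identity then gives `∑_{i ≠ 0} (b₀ aᵢ - a₀ bᵢ)² = c a₀² b₀² - 2 c a₀² b₀² + c a₀² b₀² = 0`,
so in an ordered field `b₀ • a = a₀ • b`. If `b₀ ≠ 0` this puts `x` on the line through `y` and
`z`; if `b₀ = 0` then `∑_{i ≠ 0} bᵢ² = 0` forces `y = z`.
-/

open Finset

section Lightlike

variable {ι : Type*} [Fintype ι] [DecidableEq ι]

/-- `v` is a segment of squared slope `c`, the coordinate `o` playing the role of `x₁`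
(or `v = 0`). -/
def IsLightlike {R : Type*} [CommRing R] (c : R) (o : ι) (v : ι → R) : Prop :=
  c * v o ^ 2 = ∑ i ∈ univ.erase o, v i ^ 2

theorem IsLightlike.neg {R : Type*} [CommRing R] {c : R} {o : ι} {v : ι → R}
    (hv : IsLightlike c o v) : IsLightlike c o (-v) := by
  simpa only [IsLightlike, Pi.neg_apply, neg_sq] using hv

theorem IsLightlike.sum_mul_eq {R : Type*} [CommRing R] [NoZeroDivisors R] [CharZero R]
    {c : R} {o : ι} {a b : ι → R} (ha : IsLightlike c o a) (hb : IsLightlike c o b)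
    (hab : IsLightlike c o (a + b)) : ∑ i ∈ univ.erase o, a i * b i = c * (a o * b o) := by
  unfold IsLightlike at ha hb hab
  simp only [Pi.add_apply, add_sq, mul_assoc, sum_add_distrib, ← mul_sum] at hab
  refine mul_left_cancel₀ (two_ne_zero (α := R)) ?_
  linear_combination ha + hb - hab

variable {F : Type*} [Field F] [LinearOrder F] [IsStrictOrderedRing F] {c : F} {o : ι}

theorem IsLightlike.eq_zero_of_apply_eq_zero {v : ι → F} (hv : IsLightlike c o v)
    (ho : v o = 0) : v = 0 := by
  rw [IsLightlike, ho, zero_pow two_ne_zero, mul_zero, eq_comm,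
    sum_eq_zero_iff_of_nonneg fun i _ => sq_nonneg (v i)] at hv
  funext i
  rcases eq_or_ne i o with rfl | hi
  · exact ho
  · exact pow_eq_zero_iff two_ne_zero |>.mp (hv i (mem_erase.mpr ⟨hi, mem_univ i⟩))

theorem IsLightlike.smul_eq_smul {a b : ι → F} (ha : IsLightlike c o a) (hb : IsLightlike c o b)
    (hab : IsLightlike c o (a + b)) : b o • a = a o • b := by
  have hinner := ha.sum_mul_eq hb hab
  have hlagrange : ∑ i ∈ univ.erase o, (b o * a i - a o * b i) ^ 2 = 0 := by
    calc ∑ i ∈ univ.erase o, (b o * a i - a o * b i) ^ 2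
        = b o ^ 2 * ∑ i ∈ univ.erase o, a i ^ 2 - 2 * (a o * b o) * ∑ i ∈ univ.erase o, a i * b i
          + a o ^ 2 * ∑ i ∈ univ.erase o, b i ^ 2 := by
          simp only [mul_sum, ← sum_sub_distrib, ← sum_add_distrib]
          exact sum_congr rfl fun i _ => by ring
      _ = 0 := by rw [← ha, ← hb, hinner]; ring
  rw [sum_eq_zero_iff_of_nonneg fun i _ => sq_nonneg _] at hlagrange
  funext i
  rcases eq_or_ne i o with rfl | hi
  · exact mul_comm _ _
  · exact sub_eq_zero.mp <| pow_eq_zero_iff two_ne_zero |>.mp <|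
      hlagrange i (mem_erase.mpr ⟨hi, mem_univ i⟩)

end Lightlike

theorem collinear_of_sub_eq_smul_sub {k V : Type*} [Field k] [AddCommGroup V] [Module k V]
    {x y z : V} (t : k) (h : x - y = t • (y - z)) : Collinear k ({x, y, z} : Set V) := by
  refine collinear_insert_of_mem_affineSpan_pair ?_
  have hx : AffineMap.lineMap y z (-t) = x := by
    rw [AffineMap.lineMap_apply, vsub_eq_sub, vadd_eq_add, ← neg_smul_neg, neg_neg, neg_sub, ← h,
      sub_add_cancel]
  exact hx ▸ AffineMap.lineMap_mem_affineSpan_pair _ _ _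

theorem stmt_2_general {F : Type*} [Field F] [LinearOrder F] [IsStrictOrderedRing F] {d : ℕ} (c : F)
    (x y z : Fin (d + 2) → F)
    (hxy : c * (x 0 - y 0) ^ 2 = ∑ i ∈ Finset.univ.erase 0, (x i - y i) ^ 2)
    (hyz : c * (y 0 - z 0) ^ 2 = ∑ i ∈ Finset.univ.erase 0, (y i - z i) ^ 2)
    (hzx : c * (z 0 - x 0) ^ 2 = ∑ i ∈ Finset.univ.erase 0, (z i - x i) ^ 2) :
    Collinear F ({x, y, z} : Set (Fin (d + 2) → F)) := by
  have ha : IsLightlike c 0 (x - y) := hxy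
  have hb : IsLightlike c 0 (y - z) := hyz
  have hab : IsLightlike c 0 ((x - y) + (y - z)) := by
    simpa only [sub_add_sub_cancel, neg_sub] using IsLightlike.neg (v := z - x) hzx
  have hsmul := ha.smul_eq_smul hb hab
  by_cases hb0 : (y - z) 0 = 0
  · obtain rfl : y = z := sub_eq_zero.mp (hb.eq_zero_of_apply_eq_zero hb0)
    simpa using collinear_pair F x y
  · refine collinear_of_sub_eq_smul_sub ((x - y) 0 / (y - z) 0) ?_
    rw [div_eq_inv_mul, mul_smul, ← hsmul, inv_smul_smul₀ hb0]

/-- In any ordered field `F` and any `c > 0`, there is no non-degenerate triangle all of whose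
sides have squared slope `c`: if each pair among `x, y, z ∈ F^d` satisfies
`c·(time difference)² = squared spatial distance`, then `x, y, z` are collinear. -/
theorem stmt_2 {F : Type*} [Field F] [LinearOrder F] [IsStrictOrderedRing F] {d : ℕ} (c : F) (hc : 0 < c)
    (x y z : Fin (d + 2) → F)
    (hxy : c * (x 0 - y 0) ^ 2 = ∑ i ∈ Finset.univ.erase 0, (x i - y i) ^ 2)
    (hyz : c * (y 0 - z 0) ^ 2 = ∑ i ∈ Finset.univ.erase 0, (y i - z i) ^ 2)
    (hzx : c * (z 0 - x 0) ^ 2 = ∑ i ∈ Finset.univ.erase 0, (z i - x i) ^ 2) :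
    Collinear F ({x, y, z} : Set (Fin (d + 2) → F)) :=
  stmt_2_general c x y z hxy hyz hzx
end

section
/- Let F be an ordered field in which 1 - v² has a square root for every v ∈ F with 0 ≤ v < 1. Then F is a Euclidean field, i.e., every positive element of F has a square root in F. -/
/-! Since `1 - ((x - 1) / (x + 1))² = 4x / (x + 1)²`, a square root `z` of the left-hand side
gives the square root `z (x + 1) / 2` of `x`; for `x > 0` the quotient `|x - 1| / (x + 1)`
lies in `[0, 1)`. -/

theorem one_sub_sq_sub_one_div_add_one {F : Type*} [Field F] {x : F} (hx : x + 1 ≠ 0) :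
    1 - ((x - 1) / (x + 1)) ^ 2 = 4 * x / (x + 1) ^ 2 := by
  field_simp
  ring

theorem sq_eq_of_sq_eq_one_sub_sq_sub_one_div_add_one {F : Type*} [Field F] [NeZero (2 : F)]
    {x z : F} (hx : x + 1 ≠ 0) (hz : z ^ 2 = 1 - ((x - 1) / (x + 1)) ^ 2) :
    (z * (x + 1) / 2) ^ 2 = x := by
  rw [div_pow, mul_pow, hz, one_sub_sq_sub_one_div_add_one hx]
  field_simp
  ring

theorem abs_sub_one_div_add_one_lt_one {F : Type*} [Field F] [LinearOrder F]
    [IsStrictOrderedRing F] {x : F} (hx : 0 < x) : |x - 1| / (x + 1) < 1 := by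
  rw [div_lt_one (by linarith), abs_lt]
  constructor <;> linarith

/-- If in an ordered field `F` the element `1 - v²` has a square root for every `0 ≤ v < 1`,
then `F` is Euclidean: every positive element has a square root. -/
theorem stmt_6 {F : Type*} [Field F] [LinearOrder F] [IsStrictOrderedRing F]
    (h : ∀ v : F, 0 ≤ v → v < 1 → ∃ z : F, z ^ 2 = 1 - v ^ 2) :
    ∀ x : F, 0 < x → ∃ z : F, z ^ 2 = x := by
  intro x hx
  have hx1 : 0 < x + 1 := by linarith
  obtain ⟨z, hz⟩ := h (|x - 1| / (x + 1)) (by positivity) (abs_sub_one_div_add_one_lt_one hx)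
  rw [div_pow, sq_abs, ← div_pow] at hz
  exact ⟨_, sq_eq_of_sq_eq_one_sub_sq_sub_one_div_add_one hx1.ne' hz⟩
end

section
/- Let F be an ordered field and d ≥ 3. If A is an almost Lorentz transformation of F^d, i.e., a linear bijection with μ²₁(A(x)) = λ·μ²₁(x) for all x ∈ F^d and some fixed λ ≠ 0, then λ > 0. -/
/-!
Two linear conditions `x 0 = 0` and `(A x) 0 = 0` on a space of dimension at least three have a
common nonzero solution `z`. Both `z` and `A z` are then nonzero spacelike vectors, so `mink z` and
`mink (A z) = l * mink z` are both negative, which forces `l > 0`.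
-/

/-- The Minkowski quadratic form `μ²₁` on `F^d`, `d = d' + 3 ≥ 3`. -/
def mink {F : Type*} [Field F] [LinearOrder F] [IsStrictOrderedRing F] {d : ℕ} (x : Fin (d + 3) → F) : F :=
  x 0 ^ 2 - ∑ i ∈ Finset.univ.erase 0, x i ^ 2

theorem LinearMap.exists_ne_zero_map_eq_zero_of_two_lt_finrank {K V : Type*} [Field K]
    [AddCommGroup V] [Module K V] [FiniteDimensional K V] (hV : 2 < Module.finrank K V)
    (f g : V →ₗ[K] K) : ∃ v ≠ 0, f v = 0 ∧ g v = 0 := by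
  have hker : LinearMap.ker (f.prod g) ≠ ⊥ :=
    LinearMap.ker_ne_bot_of_finrank_lt (by simpa using hV)
  obtain ⟨v, hv, hv0⟩ := (Submodule.ne_bot_iff _).mp hker
  exact ⟨v, hv0, congrArg Prod.fst hv, congrArg Prod.snd hv⟩

theorem mink_neg_of_apply_zero_eq_zero {F : Type*} [Field F] [LinearOrder F]
    [IsStrictOrderedRing F] {d : ℕ} {x : Fin (d + 3) → F} (hx0 : x 0 = 0) (hx : x ≠ 0) :
    mink x < 0 := by
  obtain ⟨j, hj⟩ := Function.ne_iff.mp hx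
  have hj0 : j ≠ 0 := by rintro rfl; exact hj hx0
  have hsum : 0 < ∑ i ∈ Finset.univ.erase 0, x i ^ 2 :=
    Finset.sum_pos' (fun i _ => sq_nonneg _)
      ⟨j, Finset.mem_erase.mpr ⟨hj0, Finset.mem_univ _⟩, sq_pos_of_ne_zero hj⟩
  simpa [mink, hx0] using hsum

theorem stmt_13_general {F : Type*} [Field F] [LinearOrder F] [IsStrictOrderedRing F] {d : ℕ}
    (A : (Fin (d + 3) → F) → (Fin (d + 3) → F))
    (hbij : Function.Bijective A)
    (hadd : ∀ x y, A (x + y) = A x + A y)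
    (hsmul : ∀ (c : F) (x), A (c • x) = c • A x)
    (l : F)
    (hμ : ∀ x, mink (A x) = l * mink x) :
    0 < l := by
  let L : (Fin (d + 3) → F) →ₗ[F] (Fin (d + 3) → F) :=
    { toFun := A, map_add' := hadd, map_smul' := hsmul }
  obtain ⟨z, hz, hz0, hAz0⟩ := LinearMap.exists_ne_zero_map_eq_zero_of_two_lt_finrank
    (by simp) (LinearMap.proj 0) ((LinearMap.proj 0).comp L)
  have hAz : A z ≠ 0 := (map_ne_zero_iff L hbij.injective).mpr hz
  have hmz := mink_neg_of_apply_zero_eq_zero hz0 hz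
  have hmAz := mink_neg_of_apply_zero_eq_zero hAz0 hAz
  rw [hμ] at hmAz
  exact pos_of_mul_neg_left hmAz hmz.le

/-- Over an ordered field in dimension `d ≥ 3`, the ratio `λ` of any almost Lorentz
transformation is positive. -/
theorem stmt_13 {F : Type*} [Field F] [LinearOrder F] [IsStrictOrderedRing F] {d : ℕ}
    (A : (Fin (d + 3) → F) → (Fin (d + 3) → F))
    (hbij : Function.Bijective A)
    (hadd : ∀ x y, A (x + y) = A x + A y)
    (hsmul : ∀ (c : F) (x), A (c • x) = c • A x)
    (l : F) (hl : l ≠ 0)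
    (hμ : ∀ x, mink (A x) = l * mink x) :
    0 < l :=
  stmt_13_general A hbij hadd hsmul l hμ
end

section
/- Let F be a Euclidean ordered field and d ≥ 3. Then every almost Lorentz transformation A of F^d (linear bijection with μ²₁(A(x)) = λ·μ²₁(x), λ ≠ 0) is the composition of a Lorentz transformation and a dilation: there exist a ∈ F, a > 0, and a Lorentz transformation L with A(x) = a·L(x) for all x. -/
section Mink

variable {F : Type*} [Field F] [LinearOrder F] [IsStrictOrderedRing F] {d : ℕ}

lemma mink_smul (c : F) (x : Fin (d + 3) → F) : mink (c • x) = c ^ 2 * mink x := by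
  simp [mink, mul_pow, Finset.mul_sum, mul_sub]

lemma mink_nonpos_of_apply_zero_eq_zero {x : Fin (d + 3) → F} (hx : x 0 = 0) : mink x ≤ 0 := by
  rw [mink, hx]
  have := Finset.sum_nonneg fun i (_ : i ∈ Finset.univ.erase 0) => sq_nonneg (x i)
  linarith

lemma apply_zero_ne_zero_of_mink_pos {x : Fin (d + 3) → F} (hx : 0 < mink x) : x 0 ≠ 0 :=
  fun h => (mink_nonpos_of_apply_zero_eq_zero h).not_gt hx

lemma mink_smul_single_one_add_smul_single_two (c₁ c₂ : F) :
    mink (c₁ • Pi.single (1 : Fin (d + 3)) (1 : F) + c₂ • Pi.single 2 1) = -(c₁ ^ 2 + c₂ ^ 2) := by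
  have h20 : (2 : Fin (d + 3)) ≠ 0 := by simp [Fin.ext_iff, Nat.mod_eq_of_lt (show 2 < d + 3 by omega)]
  have h21 : (2 : Fin (d + 3)) ≠ 1 := by simp [Fin.ext_iff, Nat.mod_eq_of_lt (show 2 < d + 3 by omega)]
  have h10 : (1 : Fin (d + 3)) ≠ 0 := by simp
  rw [mink, Finset.sum_eq_add_of_mem 1 2 (by simp [h10]) (by simp [h20]) h21.symm
    (fun i _ hi => by simp [hi.1, hi.2])]
  simp [h20, h21]

lemma nonneg_of_mink_map_eq_mul {A : (Fin (d + 3) → F) → (Fin (d + 3) → F)}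
    (hadd : ∀ x y, A (x + y) = A x + A y) (hsmul : ∀ (c : F) (x), A (c • x) = c • A x)
    {l : F} (hμ : ∀ x, mink (A x) = l * mink x) : 0 ≤ l := by
  by_contra! hneg
  set e₁ : Fin (d + 3) → F := Pi.single 1 1
  set e₂ : Fin (d + 3) → F := Pi.single 2 1
  have hplane : ∀ c₁ c₂ : F, mink (A (c₁ • e₁ + c₂ • e₂)) = -l * (c₁ ^ 2 + c₂ ^ 2) := by
    intro c₁ c₂
    rw [hμ, mink_smul_single_one_add_smul_single_two]
    ring
  set u := A e₁
  set v := A e₂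
  have hu : u 0 ≠ 0 := by
    refine apply_zero_ne_zero_of_mink_pos ?_
    rw [show u = A ((1 : F) • e₁ + (0 : F) • e₂) by simp [u], hplane]
    linarith
  -- `v 0 • u - u 0 • v` is the image of a nonzero vector of the plane and has time coordinate `0`.
  have hw : A (v 0 • e₁ + (-u 0) • e₂) = v 0 • u - u 0 • v := by
    rw [hadd, hsmul, hsmul]
    module
  have hw_pos : 0 < mink (v 0 • u - u 0 • v) := by
    rw [← hw, hplane]
    have := sq_pos_of_ne_zero (neg_ne_zero.mpr hu)
    nlinarith [sq_nonneg (v 0)]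
  exact (apply_zero_ne_zero_of_mink_pos hw_pos) (by simp [mul_comm])

end Mink

lemma exists_pos_sq_eq_of_forall_exists_sq {F : Type*} [Field F] [LinearOrder F]
    [IsStrictOrderedRing F] (heu : ∀ x : F, 0 < x → ∃ y : F, y ^ 2 = x) {l : F} (hl : 0 < l) :
    ∃ a : F, 0 < a ∧ a ^ 2 = l := by
  obtain ⟨y, hy⟩ := heu l hl
  refine ⟨|y|, abs_pos.mpr ?_, by rw [sq_abs, hy]⟩
  rintro rfl
  simp [← hy] at hl

/-- Over a Euclidean ordered field in dimension `d ≥ 3`, every almost Lorentz transformation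
is the composition of a Lorentz transformation and a dilation by a positive scalar. -/
theorem stmt_15 {F : Type*} [Field F] [LinearOrder F] [IsStrictOrderedRing F]
    (heu : ∀ x : F, 0 < x → ∃ y : F, y ^ 2 = x) {d : ℕ}
    (A : (Fin (d + 3) → F) → (Fin (d + 3) → F))
    (hbij : Function.Bijective A)
    (hadd : ∀ x y, A (x + y) = A x + A y)
    (hsmul : ∀ (c : F) (x), A (c • x) = c • A x)
    (l : F) (hl : l ≠ 0)
    (hμ : ∀ x, mink (A x) = l * mink x) :
    ∃ (a : F) (L : (Fin (d + 3) → F) → (Fin (d + 3) → F)),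
      0 < a ∧
      Function.Bijective L ∧
      (∀ x y, L (x + y) = L x + L y) ∧
      (∀ (c : F) (x), L (c • x) = c • L x) ∧
      (∀ x, mink (L x) = mink x) ∧
      (∀ x, A x = a • L x) := by
  have hl_pos : 0 < l := (nonneg_of_mink_map_eq_mul hadd hsmul hμ).lt_of_ne' hl
  obtain ⟨a, ha, rfl⟩ := exists_pos_sq_eq_of_forall_exists_sq heu hl_pos
  refine ⟨a, fun x => a⁻¹ • A x, ha, (MulAction.bijective₀ (inv_ne_zero ha.ne')).comp hbij,
    fun x y => by simp only [hadd, smul_add], fun c x => by beta_reduce; rw [hsmul, smul_comm],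
    fun x => ?_, fun x => by simp only [smul_smul, mul_inv_cancel₀ ha.ne', one_smul]⟩
  rw [mink_smul, hμ, ← mul_assoc, ← mul_pow, inv_mul_cancel₀ ha.ne', one_pow, one_mul]
end

section
/- Over the rational numbers with d = 4, the linear map A(x) = ((3x₁+x₂)/2, (x₁+3x₂)/2, x₃-x₄, x₃+x₄) satisfies μ²₁(A(x)) = 2·μ²₁(x) for all x ∈ ℚ⁴, but A is not the composition of a dilation and a Lorentz transformation over ℚ (i.e., there are no a ∈ ℚ, a ≠ 0, and ℚ-linear L preserving μ²₁ with A = a·L). -/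
/-- The Minkowski quadratic form `μ²₁(x) = x₁² - x₂² - x₃² - x₄²` on `ℚ⁴`. -/
def mink4 (x : Fin 4 → ℚ) : ℚ :=
  x 0 ^ 2 - ∑ i ∈ Finset.univ.erase 0, x i ^ 2

/-- The linear map `A(x) = ((3x₁+x₂)/2, (x₁+3x₂)/2, x₃-x₄, x₃+x₄)` on `ℚ⁴`. -/
def Amap (x : Fin 4 → ℚ) : Fin 4 → ℚ :=
  ![(3 * x 0 + x 1) / 2, (x 0 + 3 * x 1) / 2, x 2 - x 3, x 2 + x 3]

lemma mink4_eq (x : Fin 4 → ℚ) : mink4 x = x 0 ^ 2 - x 1 ^ 2 - x 2 ^ 2 - x 3 ^ 2 := by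
  have h : (Finset.univ.erase 0 : Finset (Fin 4)) = {1, 2, 3} := by decide
  simp [mink4, h, Finset.sum_insert, Finset.mem_insert]
  ring

lemma no_rat_sqrt_two (a : ℚ) : a ^ 2 ≠ 2 := by
  intro h
  have h2 : ((a : ℝ)) ^ 2 = 2 := by exact_mod_cast h
  have := irrational_sqrt_two
  rcases le_or_gt 0 (a : ℝ) with ha | ha
  · have : (a : ℝ) = Real.sqrt 2 := by
      rw [show (2:ℝ) = (a:ℝ)^2 from h2.symm, Real.sqrt_sq ha]
    exact Rat.not_irrational a (this ▸ irrational_sqrt_two)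
  · have : (-a : ℝ) = Real.sqrt 2 := by
      rw [show (2:ℝ) = (-a:ℝ)^2 by rw [neg_pow]; simp [h2], Real.sqrt_sq (by linarith)]
    have : Irrational ((-a : ℚ) : ℝ) := by rw [Rat.cast_neg, this]; exact irrational_sqrt_two
    exact Rat.not_irrational _ this

/-- `A` satisfies `μ²₁(A x) = 2·μ²₁ x` for all `x ∈ ℚ⁴`, but `A` is not the composition of a
dilation and a Lorentz transformation over `ℚ`: there are no `a ∈ ℚ`, `a ≠ 0`, and `ℚ`-linear
`L` preserving `μ²₁` with `A = a • L`. -/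
theorem stmt_16 :
    (∀ x : Fin 4 → ℚ, mink4 (Amap x) = 2 * mink4 x) ∧
    ¬ ∃ (a : ℚ) (L : (Fin 4 → ℚ) → (Fin 4 → ℚ)),
        a ≠ 0 ∧
        (∀ x y, L (x + y) = L x + L y) ∧
        (∀ (c : ℚ) (x), L (c • x) = c • L x) ∧
        (∀ x, mink4 (L x) = mink4 x) ∧
        (∀ x, Amap x = a • L x) := by
  constructor
  · intro x
    simp only [mink4_eq, Amap]
    simp [Matrix.cons_val_zero, Matrix.cons_val_one]
    ring
  · rintro ⟨a, L, ha, _, _, hL, hAL⟩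
    set x : Fin 4 → ℚ := ![1, 0, 0, 0] with hx
    have h1 : mink4 x = 1 := by simp [mink4_eq, hx]
    have h2 : mink4 (Amap x) = 2 * mink4 x := by
      simp only [mink4_eq, Amap]; simp [hx]; ring
    have h3 : mink4 (Amap x) = a ^ 2 * mink4 x := by
      rw [hAL x]
      have : mink4 (a • L x) = a ^ 2 * mink4 (L x) := by
        simp only [mink4_eq, Pi.smul_apply, smul_eq_mul]; ring
      rw [this, hL]
    rw [h1] at h2 h3
    exact no_rat_sqrt_two a (by linarith)
end
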